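/- arXiv:1205.6056 — 2 statements merged into one kernel-verified Lean document; each statement's English description precedes it below -/
import Mathlib

section
/- For all integers n ≥ 1 and k ≥ 2, the number of parameter tuples whose associated n-times persymmetric 2n×k matrix over 𝔽₂ has rank 1 is Γ_1(n,k) = 3·(2^n − 1). -/
open Finset

/-- The `2n × k` n-times persymmetric matrix over `F_2` associated to a parameter tuple
`alpha ∈ (F_2^{k+1})^n` : for `1 ≤ j ≤ n`, rows `2j-1` and `2j` are
`(alpha^(j)_1, ..., alpha^(j)_k)` and `(alpha^(j)_2, ..., alpha^(j)_{k+1})`. -/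
def persymMatrix (n k : ℕ) (α : Fin n → Fin (k + 1) → ZMod 2) :
    Matrix (Fin (2 * n)) (Fin k) (ZMod 2) :=
  Matrix.of fun r c =>
    α ⟨r.val / 2, by have := r.isLt; omega⟩ ⟨r.val % 2 + c.val, by have := c.isLt; omega⟩

/-- `Gamma n k i` is the number of parameter tuples `alpha ∈ (F_2^{k+1})^n` whose associated
n-times persymmetric `2n × k` matrix over `F_2` has rank `i`. -/
noncomputable def Gamma (n k i : ℕ) : ℕ :=
  Nat.card {α : Fin n → Fin (k + 1) → ZMod 2 // (persymMatrix n k α).rank = i}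

/-!
Over `𝔽₂` a matrix has rank one iff it is nonzero and all its nonzero rows are equal.  The block
`β = α⁽ʲ⁾` contributes the two rows `Fin.init β` and `Fin.tail β`, and a nonzero block whose two
rows lie in `{0, v}` must be `e₀` (rows `v, 0`), `eₖ` (rows `0, v`) or the all-ones vector
(rows `v, v`), the latter because `Fin.init β = Fin.tail β` forces `β` to be constant.  For
`k ≥ 2` the three possible `v` are distinct, so all nonzero blocks of a rank-one tuple coincide
and are one of these three vectors; each choice gives `2 ^ n - 1` nonzero tuples.
-/

theorem zmod_two_eq_one_of_ne_zero {c : ZMod 2} (hc : c ≠ 0) : c = 1 :=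
  Fin.eq_one_of_ne_zero c hc

theorem Submodule.mem_span_singleton_zmod_two {V : Type*} [AddCommGroup V] [Module (ZMod 2) V]
    {x v : V} : x ∈ (ZMod 2) ∙ v ↔ x = 0 ∨ x = v := by
  rw [Submodule.mem_span_singleton]
  constructor
  · rintro ⟨a, rfl⟩
    rcases eq_or_ne a 0 with rfl | ha
    · exact Or.inl (zero_smul _ _)
    · exact Or.inr (by rw [zmod_two_eq_one_of_ne_zero ha, one_smul])
  · rintro (rfl | rfl)
    exacts [⟨0, zero_smul _ _⟩, ⟨1, one_smul _ _⟩]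

namespace Matrix

variable {m n K : Type*} [Fintype n] [Finite m]

theorem rank_eq_zero_iff [Field K] (M : Matrix m n K) : M.rank = 0 ↔ M = 0 := by
  rw [rank_eq_finrank_span_row, Submodule.finrank_eq_zero, Submodule.span_eq_bot,
    Set.forall_mem_range]
  exact ⟨fun h => funext h, fun h i => congrFun h i⟩

theorem rank_le_one_iff [Field K] (M : Matrix m n K) : M.rank ≤ 1 ↔ ∃ v, ∀ i, M i ∈ K ∙ v := by
  rw [rank_eq_finrank_span_row]
  constructor
  · intro h
    obtain ⟨v, hv⟩ := ((Submodule.finrank_le_one_iff_isPrincipal _).1 h).principal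
    exact ⟨v, fun i => hv ▸ Submodule.subset_span ⟨i, rfl⟩⟩
  · rintro ⟨v, hv⟩
    calc Module.finrank K (Submodule.span K (Set.range M.row))
        ≤ Module.finrank K (K ∙ v) :=
          Submodule.finrank_mono (Submodule.span_le.2 (Set.range_subset_iff.2 hv))
      _ ≤ 1 := by simpa using finrank_span_le_card ({v} : Set (n → K))

theorem rank_eq_one_iff_zmod_two (M : Matrix m n (ZMod 2)) :
    M.rank = 1 ↔ M ≠ 0 ∧ ∃ v, ∀ i, M i = 0 ∨ M i = v := by
  have hle := rank_le_one_iff M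
  simp only [Submodule.mem_span_singleton_zmod_two] at hle
  rw [← hle, ne_eq, ← rank_eq_zero_iff]
  omega

end Matrix

section PairTuples

variable {ι M : Type*} [Fintype ι] [DecidableEq ι] [Zero M] [DecidableEq M]

def pairTuples (ι : Type*) [Fintype ι] [DecidableEq ι] (w : M) : Finset (ι → M) :=
  (Fintype.piFinset fun _ => {0, w}).erase 0

theorem mem_pairTuples {w : M} {α : ι → M} :
    α ∈ pairTuples ι w ↔ α ≠ 0 ∧ ∀ i, α i = 0 ∨ α i = w := by
  simp [pairTuples]

theorem card_pairTuples {w : M} (hw : w ≠ 0) :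
    (pairTuples ι w).card = 2 ^ Fintype.card ι - 1 := by
  rw [pairTuples, card_erase_of_mem (by simp), Fintype.card_piFinset, prod_const,
    card_pair hw.symm, card_univ]

theorem disjoint_pairTuples {w w' : M} (h : w ≠ w') :
    Disjoint (pairTuples ι w) (pairTuples ι w') := by
  rw [disjoint_left]
  intro α hα hα'
  rw [mem_pairTuples] at hα hα'
  obtain ⟨i, hi⟩ := Function.ne_iff.1 hα.1
  exact h (((hα.2 i).resolve_left hi).symm.trans ((hα'.2 i).resolve_left hi))

end PairTuples

namespace PersymBlock

variable {k : ℕ}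

def RowsIn (v : Fin k → ZMod 2) (β : Fin (k + 1) → ZMod 2) : Prop :=
  (Fin.init β = 0 ∨ Fin.init β = v) ∧ (Fin.tail β = 0 ∨ Fin.tail β = v)

def rankOneBlocks (k : ℕ) : Finset (Fin (k + 1) → ZMod 2) :=
  {Fin.cons 1 0, Fin.snoc 0 1, 1}

theorem eq_const_of_init_eq_tail {β : Fin (k + 1) → ZMod 2} (h : Fin.init β = Fin.tail β) :
    β = fun _ => β 0 := by
  funext i
  induction i using Fin.induction with
  | zero => rfl
  | succ i ih => exact (congrFun h i).symm.trans ih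

theorem init_eq_zero_and_tail_eq_zero_iff (hk : k ≠ 0) {β : Fin (k + 1) → ZMod 2} :
    Fin.init β = 0 ∧ Fin.tail β = 0 ↔ β = 0 := by
  refine ⟨fun ⟨h₁, h₂⟩ => ?_, by rintro rfl; exact ⟨rfl, rfl⟩⟩
  rw [eq_const_of_init_eq_tail (h₁.trans h₂.symm)]
  funext i
  exact congrFun h₁ ⟨0, Nat.pos_of_ne_zero hk⟩

theorem RowsIn.eq_cons_or_eq_snoc_or_eq_one (hk : k ≠ 0) {v : Fin k → ZMod 2}
    {β : Fin (k + 1) → ZMod 2} (hβ : β ≠ 0) (h : RowsIn v β) :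
    (β = Fin.cons 1 0 ∧ v = Fin.init (Fin.cons 1 0 : Fin (k + 1) → ZMod 2)) ∨
      (β = Fin.snoc 0 1 ∧ v = Fin.tail (Fin.snoc 0 1 : Fin (k + 1) → ZMod 2)) ∨
      (β = 1 ∧ v = 1) := by
  obtain ⟨h₁ | h₁, h₂ | h₂⟩ := h
  · exact absurd ((init_eq_zero_and_tail_eq_zero_iff hk).1 ⟨h₁, h₂⟩) hβ
  · have hβ' : β = Fin.snoc 0 (β (Fin.last k)) := by rw [← h₁, Fin.snoc_init_self]
    have hlast : β (Fin.last k) = 1 := by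
      refine zmod_two_eq_one_of_ne_zero fun h => hβ ?_
      rw [hβ', h]
      ext i
      cases i using Fin.lastCases <;> simp
    rw [hlast] at hβ'
    exact Or.inr (Or.inl ⟨hβ', hβ' ▸ h₂.symm⟩)
  · have hβ' : β = Fin.cons (β 0) 0 := by rw [← h₂, Fin.cons_self_tail]
    have hzero : β 0 = 1 := by
      refine zmod_two_eq_one_of_ne_zero fun h => hβ ?_
      rw [hβ', h]
      ext i
      cases i using Fin.cases <;> simp
    rw [hzero] at hβ'
    exact Or.inl ⟨hβ', hβ' ▸ h₁.symm⟩
  · have hconst := eq_const_of_init_eq_tail (h₁.trans h₂.symm)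
    have hzero : β 0 = 1 := zmod_two_eq_one_of_ne_zero fun h => hβ (by rw [hconst, h]; rfl)
    rw [hzero] at hconst
    refine Or.inr (Or.inr ⟨hconst, ?_⟩)
    rw [← h₁, hconst]
    rfl

theorem init_cons_ne_tail_snoc (hk : 2 ≤ k) :
    Fin.init (Fin.cons 1 0 : Fin (k + 1) → ZMod 2) ≠
      Fin.tail (Fin.snoc 0 1 : Fin (k + 1) → ZMod 2) := by
  intro h
  have := congrFun h ⟨0, by omega⟩
  simp [Fin.tail, Fin.snoc, Fin.init, show 1 < k by omega] at this

theorem init_cons_ne_one (hk : 2 ≤ k) : Fin.init (Fin.cons 1 0 : Fin (k + 1) → ZMod 2) ≠ 1 := by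
  intro h
  have := congrFun h ⟨1, by omega⟩
  simp [Fin.init, Fin.cons] at this

theorem tail_snoc_ne_one (hk : 2 ≤ k) : Fin.tail (Fin.snoc 0 1 : Fin (k + 1) → ZMod 2) ≠ 1 := by
  intro h
  have := congrFun h ⟨0, by omega⟩
  simp [Fin.tail, Fin.snoc, show 1 < k by omega] at this

theorem RowsIn.eq (hk : 2 ≤ k) {v : Fin k → ZMod 2} {β β' : Fin (k + 1) → ZMod 2}
    (hβ : β ≠ 0) (hβ' : β' ≠ 0) (h : RowsIn v β) (h' : RowsIn v β') : β = β' := by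
  have := init_cons_ne_tail_snoc hk
  have := init_cons_ne_one hk
  have := tail_snoc_ne_one hk
  rcases h.eq_cons_or_eq_snoc_or_eq_one (by omega) hβ with
    ⟨rfl, rfl⟩ | ⟨rfl, rfl⟩ | ⟨rfl, rfl⟩ <;>
  rcases h'.eq_cons_or_eq_snoc_or_eq_one (by omega) hβ' with
    ⟨rfl, hv⟩ | ⟨rfl, hv⟩ | ⟨rfl, hv⟩ <;>
  first | rfl | simp_all

theorem exists_rowsIn_of_mem_rankOneBlocks {w : Fin (k + 1) → ZMod 2}
    (hw : w ∈ rankOneBlocks k) : ∃ v, RowsIn v w := by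
  simp only [rankOneBlocks, mem_insert, mem_singleton] at hw
  rcases hw with rfl | rfl | rfl
  · exact ⟨_, Or.inr rfl, Or.inl (Fin.tail_cons _ _)⟩
  · exact ⟨_, Or.inl (Fin.init_snoc _ _), Or.inr rfl⟩
  · exact ⟨1, Or.inr rfl, Or.inr rfl⟩

theorem exists_rowsIn_iff {ι : Type*} (hk : 2 ≤ k) {α : ι → Fin (k + 1) → ZMod 2}
    (hα : α ≠ 0) :
    (∃ v, ∀ j, RowsIn v (α j)) ↔ ∃ w ∈ rankOneBlocks k, ∀ j, α j = 0 ∨ α j = w := by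
  constructor
  · rintro ⟨v, hv⟩
    obtain ⟨j₀, hj₀⟩ := Function.ne_iff.1 hα
    refine ⟨α j₀, ?_, fun j => or_iff_not_imp_left.2 fun hj => (hv j).eq hk hj hj₀ (hv j₀)⟩
    rcases (hv j₀).eq_cons_or_eq_snoc_or_eq_one (by omega) hj₀ with
      ⟨h, -⟩ | ⟨h, -⟩ | ⟨h, -⟩ <;> simp [rankOneBlocks, h]
  · rintro ⟨w, hw, h⟩
    obtain ⟨v, hv⟩ := exists_rowsIn_of_mem_rankOneBlocks hw
    refine ⟨v, fun j => ?_⟩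
    rcases h j with h | h <;> rw [h]
    exacts [⟨Or.inl rfl, Or.inl rfl⟩, hv]

theorem ne_zero_of_mem_rankOneBlocks {w : Fin (k + 1) → ZMod 2} (hw : w ∈ rankOneBlocks k) :
    w ≠ 0 := by
  simp only [rankOneBlocks, mem_insert, mem_singleton] at hw
  rcases hw with rfl | rfl | rfl <;> intro h
  · simpa using congrFun h 0
  · simpa using congrFun h (Fin.last k)
  · simpa using congrFun h 0

theorem card_rankOneBlocks (hk : k ≠ 0) : (rankOneBlocks k).card = 3 := by
  have hk' : 0 < k := Nat.pos_of_ne_zero hk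
  rw [rankOneBlocks, card_insert_of_notMem, card_pair]
  · intro h
    simpa [Fin.snoc, hk'] using congrFun h 0
  · simp only [mem_insert, mem_singleton, not_or]
    constructor <;> intro h
    · simpa [Fin.snoc, hk'] using congrFun h 0
    · simpa only [Fin.cons_succ, Pi.zero_apply, Pi.one_apply, zero_ne_one]
        using congrFun h (Fin.succ ⟨0, hk'⟩)

end PersymBlock

section PersymMatrix

open PersymBlock

variable {n k : ℕ}

theorem persymMatrix_apply_two_mul (α : Fin n → Fin (k + 1) → ZMod 2) (j : Fin n) :
    persymMatrix n k α ⟨2 * j, by omega⟩ = Fin.init (α j) := by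
  funext c
  simp only [persymMatrix, Matrix.of_apply, Fin.init]
  congr 2 <;> omega

theorem persymMatrix_apply_two_mul_add_one (α : Fin n → Fin (k + 1) → ZMod 2) (j : Fin n) :
    persymMatrix n k α ⟨2 * j + 1, by omega⟩ = Fin.tail (α j) := by
  funext c
  simp only [persymMatrix, Matrix.of_apply, Fin.tail]
  congr 2 <;> omega

theorem forall_persymMatrix_row_iff (α : Fin n → Fin (k + 1) → ZMod 2)
    {P : (Fin k → ZMod 2) → Prop} :
    (∀ r, P (persymMatrix n k α r)) ↔ ∀ j, P (Fin.init (α j)) ∧ P (Fin.tail (α j)) := by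
  constructor
  · intro h j
    exact ⟨persymMatrix_apply_two_mul α j ▸ h _, persymMatrix_apply_two_mul_add_one α j ▸ h _⟩
  · intro h r
    obtain ⟨j, rfl | rfl⟩ : ∃ j : Fin n, r = ⟨2 * j, by omega⟩ ∨ r = ⟨2 * j + 1, by omega⟩ :=
      ⟨⟨r / 2, by omega⟩, by simp only [Fin.ext_iff]; omega⟩
    · rw [persymMatrix_apply_two_mul]
      exact (h j).1
    · rw [persymMatrix_apply_two_mul_add_one]
      exact (h j).2

theorem persymMatrix_eq_zero_iff (hk : k ≠ 0) (α : Fin n → Fin (k + 1) → ZMod 2) :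
    persymMatrix n k α = 0 ↔ α = 0 := by
  calc persymMatrix n k α = 0 ↔ ∀ r, persymMatrix n k α r = 0 := funext_iff
    _ ↔ ∀ j, Fin.init (α j) = 0 ∧ Fin.tail (α j) = 0 :=
      forall_persymMatrix_row_iff α (P := (· = 0))
    _ ↔ ∀ j, α j = 0 := forall_congr' fun _ => init_eq_zero_and_tail_eq_zero_iff hk
    _ ↔ α = 0 := funext_iff.symm

theorem rank_persymMatrix_eq_one_iff (hk : 2 ≤ k) (α : Fin n → Fin (k + 1) → ZMod 2) :
    (persymMatrix n k α).rank = 1 ↔ ∃ w ∈ rankOneBlocks k, α ∈ pairTuples (Fin n) w := by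
  rw [Matrix.rank_eq_one_iff_zmod_two, ne_eq, persymMatrix_eq_zero_iff (by omega)]
  have hrows (v : Fin k → ZMod 2) :
      (∀ r, persymMatrix n k α r = 0 ∨ persymMatrix n k α r = v) ↔ ∀ j, RowsIn v (α j) :=
    forall_persymMatrix_row_iff α (P := fun x => x = 0 ∨ x = v)
  simp only [hrows, mem_pairTuples]
  constructor
  · rintro ⟨hα, hv⟩
    obtain ⟨w, hw, h⟩ := (exists_rowsIn_iff hk hα).1 hv
    exact ⟨w, hw, hα, h⟩
  · rintro ⟨w, hw, hα, h⟩
    exact ⟨hα, (exists_rowsIn_iff hk hα).2 ⟨w, hw, h⟩⟩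

end PersymMatrix

theorem gamma_one_general (n k : ℕ) (hk : 2 ≤ k) :
    Gamma n k 1 = 3 * (2 ^ n - 1) := by
  have hfilter : univ.filter (fun α => (persymMatrix n k α).rank = 1) =
      (PersymBlock.rankOneBlocks k).biUnion (pairTuples (Fin n)) := by
    ext α
    simp [rank_persymMatrix_eq_one_iff hk]
  rw [Gamma, Nat.card_eq_fintype_card, Fintype.card_subtype, hfilter,
    card_biUnion fun w _ w' _ h => disjoint_pairTuples h,
    sum_congr rfl fun w hw => card_pairTuples (PersymBlock.ne_zero_of_mem_rankOneBlocks hw),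
    sum_const, PersymBlock.card_rankOneBlocks (by omega), smul_eq_mul, Fintype.card_fin]

theorem gamma_one (n k : ℕ) (hn : 1 ≤ n) (hk : 2 ≤ k) :
    Gamma n k 1 = 3 * (2 ^ n - 1) :=
  gamma_one_general n k hk
end

section
/- For all integers n ≥ 1 and k ≥ 1, the first moment identity holds: Σ_{i=0}^{min(2n,k)} Γ_i(n,k)·2^{k−i} = 2^{n+kn} + 2^{(k−1)n+k} − 2^{(k−1)n} (an identity of natural numbers; equivalently Σ_i Γ_i(n,k)·2^{−i} = 2^{n+k(n−1)} + 2^{(k−1)n} − 2^{(k−1)n−k}). -/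
open Finset

/-!
Since a `2n × k` matrix of rank `i` has `2^(k-i)` kernel vectors, the left-hand side counts the
pairs `(α, x)` with `M_α x = 0`, where `M_α` is the matrix of `α`. Count them by `x` instead.
The vector `x = 0` is annihilated by all `2^((k+1)n)` tuples. For `x ≠ 0` the condition splits
over the `n` blocks: block `α^(j) = β` must be killed by the two linear forms
`β ↦ ∑_c β_(c+e) x_c` (`e = 0, 1`), which are independent (look at the lowest and the highest
nonzero coordinate of `x`), leaving `2^(k-1)` choices per block. Hence the sum is
`2^((k+1)n) + (2^k - 1) 2^((k-1)n)`.
-/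

open Module Matrix

theorem Finset.sum_card_fiber_nsmul {ι κ M : Type*} [Fintype ι] [DecidableEq κ]
    [AddCommMonoid M] {f : ι → κ} {t : Finset κ} (hf : ∀ a, f a ∈ t) (g : κ → M) :
    ∑ b ∈ t, #{a | f a = b} • g b = ∑ a, g (f a) := by
  simp_rw [← sum_const, sum_fiberwise_of_maps_to' fun a _ => hf a]

theorem LinearMap.natCard_ker {K V W : Type*} [Field K] [AddCommGroup V] [Module K V]
    [Module.Finite K V] [AddCommGroup W] [Module K W] (f : V →ₗ[K] W) :
    Nat.card (ker f) = Nat.card K ^ (finrank K V - finrank K (range f)) := by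
  rw [natCard_eq_pow_finrank (K := K), ← f.finrank_range_add_finrank_ker, Nat.add_sub_cancel_left]

theorem Matrix.natCard_mulVec_eq_zero {m n K : Type*} [Fintype m] [Fintype n] [Field K]
    (M : Matrix m n K) :
    Nat.card {x // M *ᵥ x = 0} = Nat.card K ^ (Fintype.card n - M.rank) := by
  rw [← finrank_fintype_fun_eq_card (R := K), Matrix.rank, ← M.mulVecLin.natCard_ker]
  rfl

section WindowDot

variable {R : Type*} [CommSemiring R] {k : ℕ}

/-- For `β = α j`, `windowDot x β e` is the entry of `persymMatrix n k α *ᵥ x` in row `2j + e`. -/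
def windowDot (x : Fin k → R) : (Fin (k + 1) → R) →ₗ[R] Fin 2 → R where
  toFun β e := ∑ c : Fin k, β ⟨e + c, by have := e.isLt; have := c.isLt; omega⟩ * x c
  map_add' β γ := by ext e; simp [add_mul, sum_add_distrib]
  map_smul' r β := by ext e; simp [mul_sum, mul_assoc]

theorem windowDot_zero : windowDot (0 : Fin k → R) = 0 := by
  ext β e
  simp [windowDot]

theorem windowDot_single_one (x : Fin k → R) (i : Fin (k + 1)) (e : Fin 2) :
    windowDot x (Pi.single i 1) e = ∑ c ∈ {c : Fin k | (e : ℕ) + c = i}, x c := by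
  simp [windowDot, Pi.single_apply, Fin.ext_iff, sum_filter]

theorem windowDot_surjective {K : Type*} [Field K] {x : Fin k → K} (hx : x ≠ 0) :
    Function.Surjective (windowDot x) := by
  have hsupp := Function.support_nonempty_iff.2 hx
  obtain ⟨c₀, hc₀ : x c₀ ≠ 0, hlow⟩ := wellFounded_lt.has_min _ hsupp
  obtain ⟨c₁, hc₁ : x c₁ ≠ 0, hhigh⟩ := wellFounded_gt.has_min _ hsupp
  have hu : windowDot x (Pi.single c₀.castSucc 1) = Pi.single 0 (x c₀) := by
    ext e
    rw [windowDot_single_one]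
    fin_cases e
    · rw [sum_eq_single_of_mem c₀ (by simp)]
      · simp
      · intro c hc hne
        exact absurd (Fin.ext (by simpa using hc)) hne
    · refine sum_eq_zero fun c hc => not_not.1 fun hxc => hlow c hxc ?_
      simp only [mem_filter, Fin.val_castSucc] at hc
      simp only [Fin.lt_def]; omega
  have hv : windowDot x (Pi.single c₁.succ 1) = Pi.single 1 (x c₁) := by
    ext e
    rw [windowDot_single_one]
    fin_cases e
    · refine sum_eq_zero fun c hc => not_not.1 fun hxc => hhigh c hxc ?_
      simp only [mem_filter, Fin.val_succ] at hc
      simp only [Fin.lt_def]; omega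
    · rw [sum_eq_single_of_mem c₁ (by simp [add_comm])]
      · simp
      · intro c hc hne
        exact absurd (Fin.ext (by simp only [Fin.val_succ, mem_filter] at hc; omega)) hne
  intro w
  refine ⟨(w 0 / x c₀) • Pi.single c₀.castSucc 1 + (w 1 / x c₁) • Pi.single c₁.succ 1, ?_⟩
  ext e
  fin_cases e <;> simp [hu, hv, hc₀, hc₁]

end WindowDot

theorem persymMatrix_mulVec_eq_zero_iff {n k : ℕ} (α : Fin n → Fin (k + 1) → ZMod 2)
    (x : Fin k → ZMod 2) : persymMatrix n k α *ᵥ x = 0 ↔ ∀ j, windowDot x (α j) = 0 := by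
  have hrow : ∀ r : Fin (2 * n), (persymMatrix n k α *ᵥ x) r
      = windowDot x (α ⟨r / 2, by omega⟩) ⟨r % 2, by omega⟩ := fun r => rfl
  constructor
  · intro h j
    ext e
    have := congrFun h ⟨2 * j + e, by omega⟩
    rw [hrow, Pi.zero_apply] at this
    rw [Pi.zero_apply]
    convert this using 3 <;> simp only [Fin.ext_iff, Nat.mul_add_mod_self_left] <;> omega
  · intro h
    ext r
    rw [hrow, h, Pi.zero_apply, Pi.zero_apply]

theorem card_persymMatrix_mulVec_eq_zero (n k : ℕ) (x : Fin k → ZMod 2) :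
    #{α | persymMatrix n k α *ᵥ x = 0} =
      if x = 0 then 2 ^ ((k + 1) * n) else 2 ^ ((k - 1) * n) := by
  rw [← Fintype.card_subtype, ← Nat.card_eq_fintype_card]
  simp_rw [persymMatrix_mulVec_eq_zero_iff, ← LinearMap.mem_ker]
  rw [Nat.card_congr Equiv.subtypePiEquivPi, Nat.card_fun, Nat.card_fin, LinearMap.natCard_ker,
    finrank_fin_fun, Nat.card_zmod, ← pow_mul]
  split_ifs with hx
  · rw [hx, windowDot_zero, LinearMap.range_zero, finrank_bot, Nat.sub_zero]
  · rw [LinearMap.range_eq_top.2 (windowDot_surjective hx), finrank_top, finrank_fin_fun]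
    rfl

theorem gamma_first_moment_general (n k : ℕ) :
    ∑ i ∈ Finset.range (min (2 * n) k + 1), Gamma n k i * 2 ^ (k - i)
      = 2 ^ (n + k * n) + 2 ^ ((k - 1) * n + k) - 2 ^ ((k - 1) * n) := by
  have hrank : ∀ α, (persymMatrix n k α).rank ∈ range (min (2 * n) k + 1) := fun α => by
    have := (persymMatrix n k α).rank_le_height
    have := (persymMatrix n k α).rank_le_width
    rw [mem_range]; omega
  have hGamma : ∀ i, Gamma n k i = #{α | (persymMatrix n k α).rank = i} := fun i => by
    rw [Gamma, Nat.card_eq_fintype_card, Fintype.card_subtype]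
  have hker : ∀ α, 2 ^ (k - (persymMatrix n k α).rank) = #{x | persymMatrix n k α *ᵥ x = 0} :=
    fun α => by
      rw [← Fintype.card_subtype, ← Nat.card_eq_fintype_card, natCard_mulVec_eq_zero,
        Nat.card_zmod, Fintype.card_fin]
  calc ∑ i ∈ range (min (2 * n) k + 1), Gamma n k i * 2 ^ (k - i)
      = ∑ α, 2 ^ (k - (persymMatrix n k α).rank) := by
        simp_rw [hGamma, ← smul_eq_mul]
        exact sum_card_fiber_nsmul hrank _
    _ = ∑ α, #{x | persymMatrix n k α *ᵥ x = 0} := by simp_rw [hker]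
    _ = ∑ x, #{α | persymMatrix n k α *ᵥ x = 0} :=
        sum_card_bipartiteAbove_eq_sum_card_bipartiteBelow _
    _ = 2 ^ ((k + 1) * n) + (2 ^ k - 1) * 2 ^ ((k - 1) * n) := by
        have hnonzero : ∀ x ∈ univ.erase 0, #{α | persymMatrix n k α *ᵥ x = 0} =
            2 ^ ((k - 1) * n) := fun x hx => by
          rw [card_persymMatrix_mulVec_eq_zero, if_neg (ne_of_mem_erase hx)]
        rw [← add_sum_erase _ _ (mem_univ 0), card_persymMatrix_mulVec_eq_zero, if_pos rfl,
          sum_const_nat hnonzero, card_erase_of_mem (mem_univ 0), card_univ, Fintype.card_fun,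
          ZMod.card, Fintype.card_fin]
    _ = 2 ^ (n + k * n) + 2 ^ ((k - 1) * n + k) - 2 ^ ((k - 1) * n) := by
        have hle : 2 ^ ((k - 1) * n) ≤ 2 ^ ((k - 1) * n + k) :=
          Nat.pow_le_pow_right two_pos (Nat.le_add_right _ _)
        have hexp : (k + 1) * n = n + k * n := by ring
        have hmul : 2 ^ k * 2 ^ ((k - 1) * n) = 2 ^ ((k - 1) * n + k) := by rw [← pow_add, add_comm]
        rw [hexp, Nat.sub_mul, one_mul, hmul, Nat.add_sub_assoc hle]

theorem gamma_first_moment (n k : ℕ) (hn : 1 ≤ n) (hk : 1 ≤ k) :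
    ∑ i ∈ Finset.range (min (2 * n) k + 1), Gamma n k i * 2 ^ (k - i)
      = 2 ^ (n + k * n) + 2 ^ ((k - 1) * n + k) - 2 ^ ((k - 1) * n) :=
  gamma_first_moment_general n k
end
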